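/- Strict 2-term conformal L∞-algebras (those with l³ = 0) are in one-to-one correspondence with crossed modules of Lie conformal algebras. Concretely: given a strict 2-term conformal L∞-algebra (V₁ --d--> V₀, l²_λ, 0), the brackets [x_λ y]_g := l²_λ(x,y) on g := V₀ and [h_λ k]_h := l²_λ(dh, k) on h := V₁ are Lie conformal algebra structures, φ := d is a homomorphism of Lie conformal algebras, and x ▷_λ h := l²_λ(x,h) is an action of g on h making (φ: h → g, ▷_λ) a crossed module; conversely, every crossed module of Lie conformal algebras arises this way from a unique strict 2-term conformal L∞-algebra. -/

import Mathlib

/-!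
Core framework for λ-bracket (conformal) algebra over ℂ[∂].

`CD = ℂ[∂]`.  For a `ℂ[∂]`-module `M`, `PM1 M = M[λ]` is the polynomial module in one
variable λ; it is a module over `A1 = ℂ[∂][λ]` (where `Polynomial.X : A1` is λ and
`Polynomial.C dd : A1` is ∂ acting on coefficients).  Iterating gives `PM2 M = M[λ₁,λ₂]`
(a module over `A2 = ℂ[∂][λ₁][λ₂]`, where `vl = λ₁` is the inner variable and `vm = λ₂`
the outer one) and `PM3 M = M[λ₁,λ₂,λ₃]` (over `A3`, variables `u1, u2, u3`).

`lift1 w F p` evaluates a one-variable polynomial `p = Σ aₙ λⁿ` as `Σ wⁿ • F aₙ`: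
this is how expressions like `[x_λ [y_μ z]]`, substitutions `λ ↦ -∂-λ`, `λ ↦ λ+μ`, etc.
are expressed.  Similarly `lift2`, `lift3`.
-/

set_option maxSynthPendingDepth 5

noncomputable section
open Polynomial

abbrev CD : Type := Polynomial ℂ
abbrev A1 : Type := Polynomial CD
abbrev A2 : Type := Polynomial A1
abbrev A3 : Type := Polynomial A2

/-- The operator ∂, i.e. the variable of `ℂ[∂]`. -/
def dd : CD := Polynomial.X

abbrev PM1 (M : Type) [AddCommGroup M] [Module CD M] : Type := PolynomialModule CD M
abbrev PM2 (M : Type) [AddCommGroup M] [Module CD M] : Type := PolynomialModule A1 (PM1 M)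
abbrev PM3 (M : Type) [AddCommGroup M] [Module CD M] : Type := PolynomialModule A2 (PM2 M)

namespace CLC

variable {M S : Type} [AddCommGroup M] [Module CD M] [AddCommGroup S] [Module CD S]

/-- `c ∈ ℂ` as an element of `ℂ[∂]`. -/
def cC (c : ℂ) : CD := Polynomial.C c
/-- `c ∈ ℂ` as a scalar for `M[λ]`. -/
def cC1 (c : ℂ) : A1 := Polynomial.C (Polynomial.C c)
/-- `c ∈ ℂ` as a scalar for `M[λ₁,λ₂]`. -/
def cC2 (c : ℂ) : A2 := Polynomial.C (Polynomial.C (Polynomial.C c))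

/-- λ₁ as a scalar for `M[λ₁,λ₂]`. -/
def vl : A2 := Polynomial.C Polynomial.X
/-- λ₂ as a scalar for `M[λ₁,λ₂]`. -/
def vm : A2 := Polynomial.X
/-- ∂ as a scalar for `M[λ₁,λ₂]`. -/
def vd : A2 := Polynomial.C (Polynomial.C dd)

/-- λ₁ as a scalar for `M[λ₁,λ₂,λ₃]`. -/
def u1 : A3 := Polynomial.C (Polynomial.C Polynomial.X)
/-- λ₂ as a scalar for `M[λ₁,λ₂,λ₃]`. -/
def u2 : A3 := Polynomial.C Polynomial.X
/-- λ₃ as a scalar for `M[λ₁,λ₂,λ₃]`. -/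
def u3 : A3 := Polynomial.X
/-- ∂ as a scalar for `M[λ₁,λ₂,λ₃]`. -/
def ud : A3 := Polynomial.C (Polynomial.C (Polynomial.C dd))

/-- `m`, as a constant polynomial in `M[λ]`. -/
def base1 (a : M) : PM1 M := PolynomialModule.single CD 0 a
/-- `m`, as a constant polynomial in `M[λ₁,λ₂]`. -/
def base2 (a : M) : PM2 M := PolynomialModule.single A1 0 (base1 a)
/-- `m`, as a constant polynomial in `M[λ₁,λ₂,λ₃]`. -/
def base3 (a : M) : PM3 M := PolynomialModule.single A2 0 (base2 a)

/-- Evaluation of a one-variable polynomial `Σ aₙ λⁿ` as `Σ wⁿ • F aₙ`. -/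
def lift1 {B T : Type} [CommRing B] [AddCommGroup T] [Module B T]
    (w : B) (F : S → T) (p : PM1 S) : T :=
  p.coeff.sum fun n a => w ^ n • F a

/-- Evaluation of a two-variable polynomial, with `w1` substituted for the inner
variable and `w2` for the outer one. -/
def lift2 {B T : Type} [CommRing B] [AddCommGroup T] [Module B T]
    (w1 w2 : B) (F : S → T) (q : PM2 S) : T :=
  q.coeff.sum fun n r => w2 ^ n • lift1 w1 F r

/-- Evaluation of a three-variable polynomial. -/
def lift3 {B T : Type} [CommRing B] [AddCommGroup T] [Module B T]
    (w1 w2 w3 : B) (F : S → T) (q : PM3 S) : T :=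
  q.coeff.sum fun n r => w3 ^ n • lift2 w1 w2 F r

/-- The substitution `λ ↦ -∂-λ` on `M[λ]`. -/
def negShift : PM1 M → PM1 M :=
  lift1 (-(Polynomial.C dd) - Polynomial.X : A1) base1

/-- A `ℂ[∂]`-linear map applied coefficientwise on `M[λ]`. -/
def map1 (f : S →ₗ[CD] M) : PM1 S → PM1 M :=
  lift1 (Polynomial.X : A1) (fun a => base1 (f a))

/-- A `ℂ[∂]`-linear map applied coefficientwise on `M[λ₁,λ₂]`. -/
def map2 (f : S →ₗ[CD] M) : PM2 S → PM2 M :=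
  lift2 vl vm (fun a => base2 (f a))

/-- A `ℂ[∂]`-linear map applied coefficientwise on `M[λ₁,λ₂,λ₃]`. -/
def map3 (f : S →ₗ[CD] M) : PM3 S → PM3 M :=
  lift3 u1 u2 u3 (fun a => base3 (f a))


variable {R M : Type} [AddCommGroup R] [Module CD R] [AddCommGroup M] [Module CD M]

/-- A conformal algebra structure: a ℂ-bilinear λ-product `R × R → R[λ]`
satisfying conformal sesquilinearity. -/
structure ConfBracket (R : Type) [AddCommGroup R] [Module CD R] where
  br : R → R → PM1 R
  add_left : ∀ x y z, br (x + y) z = br x z + br y z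
  add_right : ∀ x y z, br x (y + z) = br x y + br x z
  smulC_left : ∀ (c : ℂ) (x y : R), br (cC c • x) y = cC1 c • br x y
  smulC_right : ∀ (c : ℂ) (x y : R), br x (cC c • y) = cC1 c • br x y
  sesq_left : ∀ x y, br (dd • x) y = -((Polynomial.X : A1) • br x y)
  sesq_right : ∀ x y, br x (dd • y) = (Polynomial.C dd + Polynomial.X : A1) • br x y

/-- `x ∘_{λ₁} (y ∘_{λ₂} z)` as an element of `R[λ₁,λ₂]`. -/
def jT1 (br : R → R → PM1 R) (x y z : R) : PM2 R :=
  lift1 vm (fun a => lift1 vl base2 (br x a)) (br y z)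

/-- `(x ∘_{λ₁} y) ∘_{λ₁+λ₂} z` as an element of `R[λ₁,λ₂]`. -/
def jT2 (br : R → R → PM1 R) (x y z : R) : PM2 R :=
  lift1 vl (fun a => lift1 (vl + vm) base2 (br a z)) (br x y)

/-- `y ∘_{λ₂} (x ∘_{λ₁} z)` as an element of `R[λ₁,λ₂]`. -/
def jT3 (br : R → R → PM1 R) (x y z : R) : PM2 R :=
  lift1 vl (fun a => lift1 vm base2 (br y a)) (br x z)

/-- `(x ∘_{λ₁} z) ∘_{-∂-λ₂} y` as an element of `R[λ₁,λ₂]`. -/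
def jT4 (br : R → R → PM1 R) (x y z : R) : PM2 R :=
  lift1 vl (fun a => lift1 (-vd - vm) base2 (br a y)) (br x z)

namespace ConfBracket

variable (B : ConfBracket R)

/-- Skew-symmetry `[x_λ y] = -[y_{-∂-λ} x]`. -/
def Skew : Prop := ∀ x y, B.br x y = - negShift (B.br y x)

/-- The Jacobi identity `[x_λ [y_μ z]] = [[x_λ y]_{λ+μ} z] + [y_μ [x_λ z]]`. -/
def Jacobi : Prop := ∀ x y z, jT1 B.br x y z = jT2 B.br x y z + jT3 B.br x y z

/-- The left Leibniz identity `x∘_λ(y∘_μ z) = (x∘_λ y)∘_{λ+μ} z + y∘_μ(x∘_λ z)`. -/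
def LeftLeibniz : Prop := ∀ x y z, jT1 B.br x y z = jT2 B.br x y z + jT3 B.br x y z

/-- The right Leibniz identity `(x∘_λ y)∘_{λ+μ} z = x∘_λ(y∘_μ z) + (x∘_λ z)∘_{-∂-μ} y`. -/
def RightLeibniz : Prop := ∀ x y z, jT2 B.br x y z = jT1 B.br x y z + jT4 B.br x y z

/-- A Lie conformal algebra: skew-symmetric and satisfying the Jacobi identity. -/
def IsLie : Prop := B.Skew ∧ B.Jacobi

end ConfBracket

/-- A conformal left-action datum: a ℂ-bilinear map `R × M → M[λ]` satisfying
conformal sesquilinearity. -/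
structure ConfAction (R M : Type) [AddCommGroup R] [Module CD R]
    [AddCommGroup M] [Module CD M] where
  act : R → M → PM1 M
  add_left : ∀ (x y : R) (v : M), act (x + y) v = act x v + act y v
  add_right : ∀ (x : R) (v w : M), act x (v + w) = act x v + act x w
  smulC_left : ∀ (c : ℂ) (x : R) (v : M), act (cC c • x) v = cC1 c • act x v
  smulC_right : ∀ (c : ℂ) (x : R) (v : M), act x (cC c • v) = cC1 c • act x v
  sesq_left : ∀ (x : R) (v : M), act (dd • x) v = -((Polynomial.X : A1) • act x v)
  sesq_right : ∀ (x : R) (v : M),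
    act x (dd • v) = (Polynomial.C dd + Polynomial.X : A1) • act x v

/-- The left-module identity `[x_λ y] ▷_{λ+μ} v = x ▷_λ (y ▷_μ v) - y ▷_μ (x ▷_λ v)`. -/
def IsLeftModule (B : ConfBracket R) (A : ConfAction R M) : Prop :=
  ∀ (x y : R) (v : M),
    lift1 vl (fun a => lift1 (vl + vm) base2 (A.act a v)) (B.br x y) =
      lift1 vm (fun m => lift1 vl base2 (A.act x m)) (A.act y v)
      - lift1 vl (fun m => lift1 vm base2 (A.act y m)) (A.act x v)

/-- A conformal right-action datum: a ℂ-bilinear map `M × R → M[λ]` satisfying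
conformal sesquilinearity. -/
structure ConfRAction (R M : Type) [AddCommGroup R] [Module CD R]
    [AddCommGroup M] [Module CD M] where
  act : M → R → PM1 M
  add_left : ∀ (v w : M) (x : R), act (v + w) x = act v x + act w x
  add_right : ∀ (v : M) (x y : R), act v (x + y) = act v x + act v y
  smulC_left : ∀ (c : ℂ) (v : M) (x : R), act (cC c • v) x = cC1 c • act v x
  smulC_right : ∀ (c : ℂ) (v : M) (x : R), act v (cC c • x) = cC1 c • act v x
  sesq_left : ∀ (v : M) (x : R), act (dd • v) x = -((Polynomial.X : A1) • act v x)
  sesq_right : ∀ (v : M) (x : R),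
    act v (dd • x) = (Polynomial.C dd + Polynomial.X : A1) • act v x

/-- The right-module identity
`v ◁_μ [x_λ y] = (v ◁_μ x) ◁_{λ+μ} y - (v ◁_μ y) ◁_{-∂-λ} x`
(here λ is the inner variable `vl` and μ the outer variable `vm`). -/
def IsRightModule (B : ConfBracket R) (A : ConfRAction R M) : Prop :=
  ∀ (x y : R) (v : M),
    lift1 vl (fun a => lift1 vm base2 (A.act v a)) (B.br x y) =
      lift1 vm (fun m => lift1 (vl + vm) base2 (A.act m y)) (A.act v x)
      - lift1 vm (fun m => lift1 (-vd - vl) base2 (A.act m x)) (A.act v y)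


variable {V0 V1 : Type} [AddCommGroup V0] [Module CD V0] [AddCommGroup V1] [Module CD V1]

/-- A 2-term conformal `L∞`-algebra `(V₁ --d--> V₀, l², l³)`.

`l200, l201, l210` are the components of `l²` on `V₀×V₀`, `V₀×V₁`, `V₁×V₀`
(there is no `V₁×V₁` component, cf. `0 ≤ i+j ≤ 1`; equivalently `l²_λ(h,k)=0`).
`l3` takes values in `V₁[λ₁,λ₂]`; the conditions (a)–(i) of the definition are the
fields `condA`–`condI` (condition (c) being vacuous). -/
structure TwoTerm (V0 V1 : Type) [AddCommGroup V0] [Module CD V0]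
    [AddCommGroup V1] [Module CD V1] where
  d : V1 →ₗ[CD] V0
  l200 : V0 → V0 → PM1 V0
  l201 : V0 → V1 → PM1 V1
  l210 : V1 → V0 → PM1 V1
  l3 : V0 → V0 → V0 → PM2 V1
  -- conformal sesquilinearity and ℂ-bilinearity of the brackets
  l200_add_left : ∀ x y z, l200 (x + y) z = l200 x z + l200 y z
  l200_add_right : ∀ x y z, l200 x (y + z) = l200 x y + l200 x z
  l200_smulC_left : ∀ (c : ℂ) x y, l200 (cC c • x) y = cC1 c • l200 x y
  l200_smulC_right : ∀ (c : ℂ) x y, l200 x (cC c • y) = cC1 c • l200 x y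
  l200_sesq_left : ∀ x y, l200 (dd • x) y = -((Polynomial.X : A1) • l200 x y)
  l200_sesq_right : ∀ x y,
    l200 x (dd • y) = (Polynomial.C dd + Polynomial.X : A1) • l200 x y
  l201_add_left : ∀ x y h, l201 (x + y) h = l201 x h + l201 y h
  l201_add_right : ∀ x h k, l201 x (h + k) = l201 x h + l201 x k
  l201_smulC_left : ∀ (c : ℂ) x h, l201 (cC c • x) h = cC1 c • l201 x h
  l201_smulC_right : ∀ (c : ℂ) x h, l201 x (cC c • h) = cC1 c • l201 x h
  l201_sesq_left : ∀ x h, l201 (dd • x) h = -((Polynomial.X : A1) • l201 x h)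
  l201_sesq_right : ∀ x h,
    l201 x (dd • h) = (Polynomial.C dd + Polynomial.X : A1) • l201 x h
  l210_add_left : ∀ h k x, l210 (h + k) x = l210 h x + l210 k x
  l210_add_right : ∀ h x y, l210 h (x + y) = l210 h x + l210 h y
  l210_smulC_left : ∀ (c : ℂ) h x, l210 (cC c • h) x = cC1 c • l210 h x
  l210_smulC_right : ∀ (c : ℂ) h x, l210 h (cC c • x) = cC1 c • l210 h x
  l210_sesq_left : ∀ h x, l210 (dd • h) x = -((Polynomial.X : A1) • l210 h x)
  l210_sesq_right : ∀ h x,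
    l210 h (dd • x) = (Polynomial.C dd + Polynomial.X : A1) • l210 h x
  l3_add1 : ∀ x y z t, l3 (x + y) z t = l3 x z t + l3 y z t
  l3_add2 : ∀ x y z t, l3 x (y + z) t = l3 x y t + l3 x z t
  l3_add3 : ∀ x y z t, l3 x y (z + t) = l3 x y z + l3 x y t
  l3_smulC1 : ∀ (c : ℂ) x y z, l3 (cC c • x) y z = cC2 c • l3 x y z
  l3_smulC2 : ∀ (c : ℂ) x y z, l3 x (cC c • y) z = cC2 c • l3 x y z
  l3_smulC3 : ∀ (c : ℂ) x y z, l3 x y (cC c • z) = cC2 c • l3 x y z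
  l3_sesq1 : ∀ x y z, l3 (dd • x) y z = -(vl • l3 x y z)
  l3_sesq2 : ∀ x y z, l3 x (dd • y) z = -(vm • l3 x y z)
  l3_sesq3 : ∀ x y z, l3 x y (dd • z) = (vd + vl + vm) • l3 x y z
  -- (a) skew-symmetry of l² on V₀×V₀
  condA : ∀ x y, l200 x y = - negShift (l200 y x)
  -- (b) skew-symmetry between the V₀×V₁ and V₁×V₀ components
  condB : ∀ x h, l201 x h = - negShift (l210 h x)
  -- (d) complete skew-symmetry of l³
  condD1 : ∀ x y z, l3 x y z = - lift2 vm vl base2 (l3 y x z)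
  condD2 : ∀ x y z, l3 x y z = - lift2 vl (-vd - vl - vm) base2 (l3 x z y)
  -- (e)
  condE : ∀ x h, map1 d (l201 x h) = l200 x (d h)
  -- (f)
  condF : ∀ h k, l201 (d h) k = l210 h (d k)
  -- (g)
  condG : ∀ x y z, map2 d (l3 x y z) =
    jT1 l200 x y z - jT2 l200 x y z - jT3 l200 x y z
  -- (h)
  condH : ∀ x y h, l3 x y (d h) =
      lift1 vm (fun k => lift1 vl base2 (l201 x k)) (l201 y h)
    - lift1 vl (fun a => lift1 (vl + vm) base2 (l201 a h)) (l200 x y)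
    - lift1 vl (fun k => lift1 vm base2 (l201 y k)) (l201 x h)
  -- (i)
  condI : ∀ x y z t,
      lift2 u2 u3 (fun a => lift1 u1 base3 (l201 x a)) (l3 y z t)
    - lift2 u1 u3 (fun a => lift1 u2 base3 (l201 y a)) (l3 x z t)
    + lift2 u1 u2 (fun a => lift1 u3 base3 (l201 z a)) (l3 x y t)
    + lift2 u1 u2 (fun h => lift1 (u1 + u2 + u3) base3 (l210 h t)) (l3 x y z)
    - lift1 u1 (fun a => lift2 (u1 + u2) u3 base3 (l3 a z t)) (l200 x y)
    - lift1 u1 (fun a => lift2 u2 (u1 + u3) base3 (l3 y a t)) (l200 x z)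
    - lift1 u1 (fun a => lift2 u2 u3 base3 (l3 y z a)) (l200 x t)
    + lift1 u2 (fun a => lift2 u1 (u2 + u3) base3 (l3 x a t)) (l200 y z)
    + lift1 u2 (fun a => lift2 u1 u3 base3 (l3 x z a)) (l200 y t)
    - lift1 u3 (fun a => lift2 u1 u2 base3 (l3 x y a)) (l200 z t)
    = 0

/-- The `V₀×V₀` component of `l²` of a 2-term conformal `L∞`-algebra,
as a conformal-algebra datum. -/
def TwoTerm.toBracket (T : TwoTerm V0 V1) : ConfBracket V0 where
  br := T.l200
  add_left := T.l200_add_left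
  add_right := T.l200_add_right
  smulC_left := T.l200_smulC_left
  smulC_right := T.l200_smulC_right
  sesq_left := T.l200_sesq_left
  sesq_right := T.l200_sesq_right

/-- The `V₀×V₁` component of `l²` of a 2-term conformal `L∞`-algebra,
as a conformal-action datum. -/
def TwoTerm.toAction (T : TwoTerm V0 V1) : ConfAction V0 V1 where
  act := T.l201
  add_left := T.l201_add_left
  add_right := T.l201_add_right
  smulC_left := T.l201_smulC_left
  smulC_right := T.l201_smulC_right
  sesq_left := T.l201_sesq_left
  sesq_right := T.l201_sesq_right

end CLC

open CLC

/-- A crossed module of Lie conformal algebras: a homomorphism `φ : h → g` of Lie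
conformal algebras together with a left `g`-module action `▷_λ` on `h` such that
`φ(x ▷_λ k) = [x_λ φ(k)]_g` and `φ(a) ▷_λ k = [a_λ k]_h`. -/
structure CrossedModule (g h : Type) [AddCommGroup g] [Module CD g]
    [AddCommGroup h] [Module CD h] where
  Bg : ConfBracket g
  Bh : ConfBracket h
  skew_g : Bg.Skew
  jacobi_g : Bg.Jacobi
  skew_h : Bh.Skew
  jacobi_h : Bh.Jacobi
  φ : h →ₗ[CD] g
  φ_hom : ∀ a b, map1 φ (Bh.br a b) = Bg.br (φ a) (φ b)
  A : ConfAction g h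
  isModule : IsLeftModule Bg A
  peiffer1 : ∀ (x : g) (k : h), map1 φ (A.act x k) = Bg.br x (φ k)
  peiffer2 : ∀ (a k : h), A.act (φ a) k = Bh.br a k


/-! With `l³ = 0`, conditions (g) and (h) of a 2-term conformal `L∞`-algebra say exactly
that `l²` is a Lie conformal bracket on `V₀` and that `V₀` acts on `V₁`, while (e) and (f)
are the two Peiffer identities. The one non-formal point is that `[a_λ b] := da ▷_λ b` is a
Lie conformal bracket on `V₁`: skew-symmetry comes from (b) and (f), and the Jacobi identity
is the module identity at `da, db`, rewritten through (e). Conversely, (b) forces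
`l²_λ(h, x) = -(x ▷_{-∂-λ} h)`, which is consistent with (b) because `λ ↦ -∂-λ` is an
involution; all the other data of a strict 2-term algebra are read off the crossed module. -/

namespace CLC

section Lift

variable {S M : Type} [AddCommGroup S] [Module CD S] [AddCommGroup M] [Module CD M]
  {B T : Type} [CommRing B] [AddCommGroup T] [Module B T]

def lift1AddHom (w : B) (F : S →+ T) : PM1 S →+ T where
  toFun := lift1 w F
  map_zero' := Finsupp.sum_zero_index
  map_add' p q := Finsupp.sum_add_index' (fun _ => by simp) (fun _ _ _ => by simp [smul_add])

lemma lift1_zero (w : B) (F : S → T) : lift1 w F (0 : PM1 S) = 0 :=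
  Finsupp.sum_zero_index

lemma lift2_zero (w1 w2 : B) (F : S → T) : lift2 w1 w2 F (0 : PM2 S) = 0 :=
  Finsupp.sum_zero_index

lemma lift1_add (w : B) {F : S → T} (hF : ∀ a b, F (a + b) = F a + F b) (p q : PM1 S) :
    lift1 w F (p + q) = lift1 w F p + lift1 w F q :=
  map_add (lift1AddHom w (.mk' F hF)) p q

lemma lift1_neg (w : B) {F : S → T} (hF : ∀ a b, F (a + b) = F a + F b) (p : PM1 S) :
    lift1 w F (-p) = -lift1 w F p :=
  map_neg (lift1AddHom w (.mk' F hF)) p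

lemma lift1_single (w : B) {F : S → T} (hF : ∀ a b, F (a + b) = F a + F b) (n : ℕ) (a : S) :
    lift1 w F (PolynomialModule.single CD n a) = w ^ n • F a :=
  Finsupp.sum_single_index (by rw [show F 0 = 0 from (AddMonoidHom.mk' F hF).map_zero, smul_zero])

lemma base1_add (a b : M) : base1 (a + b) = base1 a + base1 b :=
  PolynomialModule.single_add _ _ _

lemma base2_add (a b : M) : base2 (a + b) = base2 a + base2 b := by
  rw [base2, base1_add, PolynomialModule.single_add]
  rfl

lemma base1_smul (r : CD) (a : M) : base1 (r • a) = (Polynomial.C r : A1) • base1 a := by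
  rw [base1, base1, ← Polynomial.monomial_zero_left, PolynomialModule.monomial_smul_single]

lemma X_pow_smul_base1 (n : ℕ) (a : M) :
    (Polynomial.X : A1) ^ n • base1 a = PolynomialModule.single CD n a := by
  rw [Polynomial.X_pow_eq_monomial, base1, PolynomialModule.monomial_smul_single, one_smul,
    add_zero]

lemma lift1_smul (w : B) (g : CD →+* B) {F : S → T} (hF : ∀ a b, F (a + b) = F a + F b)
    (hFg : ∀ (r : CD) a, F (r • a) = g r • F a) (p : A1) (q : PM1 S) :
    lift1 w F (p • q) = Polynomial.eval₂ g w p • lift1 w F q := by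
  induction p using Polynomial.induction_on' with
  | add p1 p2 hp1 hp2 =>
    rw [add_smul, lift1_add w hF, hp1, hp2, Polynomial.eval₂_add, add_smul]
  | monomial n r =>
    induction q using PolynomialModule.induction_linear with
    | zero => rw [smul_zero, lift1_zero, smul_zero]
    | add q1 q2 hq1 hq2 => rw [smul_add, lift1_add w hF, hq1, hq2, lift1_add w hF, smul_add]
    | single j a =>
      rw [PolynomialModule.monomial_smul_single, lift1_single w hF, lift1_single w hF, hFg,
        Polynomial.eval₂_monomial, smul_smul, smul_smul, pow_add]
      congr 1
      ring

lemma map1_single (f : S →ₗ[CD] M) (n : ℕ) (a : S) :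
    map1 f (PolynomialModule.single CD n a) = PolynomialModule.single CD n (f a) := by
  rw [map1, lift1_single _ (fun a b => by rw [map_add, base1_add]), X_pow_smul_base1]

lemma lift1_map1 (w : B) {F : M → T} (hF : ∀ a b, F (a + b) = F a + F b) (f : S →ₗ[CD] M)
    (p : PM1 S) : lift1 w F (map1 f p) = lift1 w (fun a => F (f a)) p := by
  have hFf : ∀ a b, F (f (a + b)) = F (f a) + F (f b) := fun a b => by rw [map_add, hF]
  have hmap : ∀ p q, map1 f (p + q) = map1 f p + map1 f q :=
    lift1_add _ fun a b => by rw [map_add, base1_add]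
  induction p using PolynomialModule.induction_linear with
  | zero => rw [map1, lift1_zero, lift1_zero, lift1_zero]
  | add p q hp hq => rw [hmap, lift1_add w hF, hp, hq, lift1_add w hFf]
  | single n a => rw [map1_single, lift1_single w hF, lift1_single w hFf]

lemma map2_zero (f : S →ₗ[CD] M) : map2 f (0 : PM2 S) = 0 :=
  lift2_zero _ _ _

end Lift

section NegShift

variable {M : Type} [AddCommGroup M] [Module CD M]

lemma negShift_add (p q : PM1 M) : negShift (p + q) = negShift p + negShift q :=
  lift1_add _ base1_add p q

lemma negShift_neg (p : PM1 M) : negShift (-p) = -negShift p :=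
  lift1_neg _ base1_add p

lemma negShift_smul (p : A1) (q : PM1 M) :
    negShift (p • q) =
      Polynomial.eval₂ Polynomial.C (-Polynomial.C dd - Polynomial.X : A1) p • negShift q :=
  lift1_smul _ Polynomial.C base1_add base1_smul p q

lemma negShift_single (n : ℕ) (a : M) :
    negShift (PolynomialModule.single CD n a) =
      (-Polynomial.C dd - Polynomial.X : A1) ^ n • base1 a :=
  lift1_single _ base1_add n a

lemma negShift_negShift (q : PM1 M) : negShift (negShift q) = q := by
  induction q using PolynomialModule.induction_linear with
  | zero => rw [negShift, lift1_zero, lift1_zero]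
  | add p q hp hq => rw [negShift_add, negShift_add, hp, hq]
  | single n a =>
    have hbase : negShift (base1 a) = base1 a :=
      (negShift_single 0 a).trans (by rw [pow_zero, one_smul])
    rw [negShift_single, negShift_smul, hbase, Polynomial.eval₂_pow, Polynomial.eval₂_sub,
      Polynomial.eval₂_neg, Polynomial.eval₂_C, Polynomial.eval₂_X, sub_sub_cancel,
      X_pow_smul_base1]

end NegShift

section Action

variable {R M : Type} [AddCommGroup R] [Module CD R] [AddCommGroup M] [Module CD M]

def ConfAction.inducedBracket (A : ConfAction R M) (φ : M →ₗ[CD] R) : ConfBracket M where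
  br a b := A.act (φ a) b
  add_left _ _ _ := by simp only [map_add, A.add_left]
  add_right _ := A.add_right _
  smulC_left _ _ _ := by simp only [map_smul, A.smulC_left]
  smulC_right _ _ := A.smulC_right _ _
  sesq_left _ _ := by simp only [map_smul, A.sesq_left]
  sesq_right _ := A.sesq_right _

theorem ConfAction.inducedBracket_jacobi {B : ConfBracket R} {A : ConfAction R M}
    {φ : M →ₗ[CD] R} (hA : IsLeftModule B A)
    (hφ : ∀ x k, map1 φ (A.act x k) = B.br x (φ k)) : (A.inducedBracket φ).Jacobi := by
  intro a b c
  have hF : ∀ x y, lift1 (vl + vm) base2 (A.act (x + y) c) =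
      lift1 (vl + vm) base2 (A.act x c) + lift1 (vl + vm) base2 (A.act y c) := fun x y => by
    rw [A.add_left, lift1_add _ base2_add]
  have hmod := hA (φ a) (φ b) c
  rw [← hφ, lift1_map1 vl hF] at hmod
  simp only [jT1, jT2, jT3, inducedBracket, hmod, sub_add_cancel]

def ConfAction.transpose (A : ConfAction R M) : ConfRAction R M where
  act k x := -negShift (A.act x k)
  add_left _ _ _ := by rw [A.add_right, negShift_add, neg_add]
  add_right _ _ _ := by rw [A.add_left, negShift_add, neg_add]
  smulC_left _ _ _ := by
    rw [A.smulC_right, negShift_smul, cC1, Polynomial.eval₂_C, smul_neg]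
  smulC_right _ _ _ := by
    rw [A.smulC_left, negShift_smul, cC1, Polynomial.eval₂_C, smul_neg]
  sesq_left _ _ := by
    rw [A.sesq_right, negShift_smul, Polynomial.eval₂_add, Polynomial.eval₂_C,
      Polynomial.eval₂_X]
    module
  sesq_right _ _ := by
    rw [A.sesq_left, negShift_neg, negShift_smul, Polynomial.eval₂_X]
    module

end Action

section TwoTerm

variable {V0 V1 : Type} [AddCommGroup V0] [Module CD V0] [AddCommGroup V1] [Module CD V1]

theorem TwoTerm.jacobi_of_l3_eq_zero (T : TwoTerm V0 V1) (hT : T.l3 = fun _ _ _ => 0) :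
    T.toBracket.Jacobi := by
  intro x y z
  have hG := T.condG x y z
  simp only [hT, map2_zero] at hG
  rw [sub_sub, eq_comm, sub_eq_zero] at hG
  exact hG

theorem TwoTerm.isLeftModule_of_l3_eq_zero (T : TwoTerm V0 V1) (hT : T.l3 = fun _ _ _ => 0) :
    IsLeftModule T.toBracket T.toAction := by
  intro x y v
  have hH := T.condH x y v
  simp only [hT] at hH
  rw [sub_right_comm, eq_comm, sub_eq_zero] at hH
  exact hH.symm

theorem TwoTerm.inducedBracket_skew (T : TwoTerm V0 V1) :
    (T.toAction.inducedBracket T.d).Skew := fun a b => by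
  show T.l201 (T.d a) b = -negShift (T.l201 (T.d b) a)
  rw [T.condB, ← T.condF]

def TwoTerm.toCrossedModule (T : TwoTerm V0 V1) (hT : T.l3 = fun _ _ _ => 0) :
    CrossedModule V0 V1 where
  Bg := T.toBracket
  Bh := T.toAction.inducedBracket T.d
  skew_g := T.condA
  jacobi_g := T.jacobi_of_l3_eq_zero hT
  skew_h := T.inducedBracket_skew
  jacobi_h := ConfAction.inducedBracket_jacobi (T.isLeftModule_of_l3_eq_zero hT) T.condE
  φ := T.d
  φ_hom a := T.condE (T.d a)
  A := T.toAction
  isModule := T.isLeftModule_of_l3_eq_zero hT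
  peiffer1 := T.condE
  peiffer2 _ _ := rfl

end TwoTerm

end CLC

def CrossedModule.toTwoTerm {g h : Type} [AddCommGroup g] [Module CD g] [AddCommGroup h]
    [Module CD h] (CM : CrossedModule g h) : TwoTerm g h where
  d := CM.φ
  l200 := CM.Bg.br
  l201 := CM.A.act
  l210 := CM.A.transpose.act
  l3 _ _ _ := 0
  l200_add_left := CM.Bg.add_left
  l200_add_right := CM.Bg.add_right
  l200_smulC_left := CM.Bg.smulC_left
  l200_smulC_right := CM.Bg.smulC_right
  l200_sesq_left := CM.Bg.sesq_left
  l200_sesq_right := CM.Bg.sesq_right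
  l201_add_left := CM.A.add_left
  l201_add_right := CM.A.add_right
  l201_smulC_left := CM.A.smulC_left
  l201_smulC_right := CM.A.smulC_right
  l201_sesq_left := CM.A.sesq_left
  l201_sesq_right := CM.A.sesq_right
  l210_add_left := CM.A.transpose.add_left
  l210_add_right := CM.A.transpose.add_right
  l210_smulC_left := CM.A.transpose.smulC_left
  l210_smulC_right := CM.A.transpose.smulC_right
  l210_sesq_left := CM.A.transpose.sesq_left
  l210_sesq_right := CM.A.transpose.sesq_right
  l3_add1 _ _ _ _ := (add_zero 0).symm
  l3_add2 _ _ _ _ := (add_zero 0).symm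
  l3_add3 _ _ _ _ := (add_zero 0).symm
  l3_smulC1 _ _ _ _ := (smul_zero _).symm
  l3_smulC2 _ _ _ _ := (smul_zero _).symm
  l3_smulC3 _ _ _ _ := (smul_zero _).symm
  l3_sesq1 _ _ _ := by rw [smul_zero, neg_zero]
  l3_sesq2 _ _ _ := by rw [smul_zero, neg_zero]
  l3_sesq3 _ _ _ := (smul_zero _).symm
  condA := CM.skew_g
  condB _ _ := by
    rw [ConfAction.transpose, negShift_neg, neg_neg, negShift_negShift]
  condD1 _ _ _ := by rw [lift2_zero, neg_zero]
  condD2 _ _ _ := by rw [lift2_zero, neg_zero]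
  condE := CM.peiffer1
  condF a k := by
    show CM.A.act (CM.φ a) k = -negShift (CM.A.act (CM.φ k) a)
    rw [CM.peiffer2, CM.peiffer2]
    exact CM.skew_h a k
  condG x y z := by
    rw [map2_zero, CM.jacobi_g x y z]
    abel
  condH x y k := by
    rw [CM.isModule x y k]
    abel
  condI _ _ _ _ := by simp [lift1, lift2]

/-- **Statement 8.** Strict 2-term conformal `L∞`-algebras (those with `l³ = 0`)
are in one-to-one correspondence with crossed modules of Lie conformal algebras.
Given a strict 2-term conformal `L∞`-algebra `(V₁ --d--> V₀, l², 0)`, the brackets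
`[x_λ y]_g := l²_λ(x,y)` on `g := V₀` and `[a_λ b]_h := l²_λ(da, b)` on `h := V₁`
are Lie conformal algebra structures, `φ := d` is a homomorphism, and
`x ▷_λ k := l²_λ(x,k)` is an action making `(d : V₁ → V₀, ▷)` a crossed module;
conversely, every crossed module arises this way from a unique strict 2-term
conformal `L∞`-algebra. -/
theorem strict_twoTerm_iff_crossedModule
    {g h : Type} [AddCommGroup g] [Module CD g] [AddCommGroup h] [Module CD h] :
    (∀ T : TwoTerm g h, T.l3 = (fun _ _ _ => 0) →
        ∃ CM : CrossedModule g h,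
          CM.φ = T.d ∧
          CM.Bg.br = T.l200 ∧
          CM.Bh.br = (fun a b => T.l201 (T.d a) b) ∧
          CM.A.act = T.l201) ∧
    (∀ CM : CrossedModule g h,
        ∃! T : TwoTerm g h,
          T.l3 = (fun _ _ _ => 0) ∧
          T.d = CM.φ ∧
          T.l200 = CM.Bg.br ∧
          T.l201 = CM.A.act ∧
          T.l210 = (fun k x => - negShift (CM.A.act x k))) := by
  refine ⟨fun T hT => ⟨T.toCrossedModule hT, rfl, rfl, rfl, rfl⟩, fun CM => ?_⟩
  refine ⟨CM.toTwoTerm, ⟨rfl, rfl, rfl, rfl, rfl⟩, ?_⟩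
  rintro ⟨⟩ ⟨rfl, rfl, rfl, rfl, rfl⟩
  rfl
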